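/- arXiv:1510.02137 — 10 statements merged into one kernel-verified Lean document; each statement's English description precedes it below -/
import Mathlib

section
/- Let A be an abelian group and f, g : A → ℤ be surjective homomorphisms. Then f(ker g) = g(ker f) (as subgroups of ℤ). -/
theorem aux_le (A : Type*) [AddCommGroup A] (f g : A →+ ℤ)
    (hf : Function.Surjective f) (hg : Function.Surjective g) :
    AddSubgroup.map f g.ker ≤ AddSubgroup.map g f.ker := by
  obtain ⟨n, hn⟩ := Int.subgroup_cyclic (AddSubgroup.map g f.ker)
  obtain ⟨e, he⟩ := hf 1
  -- coprimality of g e and n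
  obtain ⟨b, hb⟩ := hg 1
  have hkermem : ∀ a : A, g (a - f a • e) ∈ AddSubgroup.map g f.ker := by
    intro a
    exact ⟨a - f a • e, by simp [AddMonoidHom.mem_ker, he], rfl⟩
  have hdvd : ∀ a : A, n ∣ g (a - f a • e) := by
    intro a
    have := hkermem a
    rw [hn, AddSubgroup.mem_closure_singleton] at this
    obtain ⟨k, hk⟩ := this
    exact Dvd.intro_left k (by simpa [smul_eq_mul] using hk)
  have hcop : IsCoprime n (g e) := by
    obtain ⟨t, ht⟩ := hdvd b
    refine ⟨t, f b, ?_⟩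
    have : g (b - f b • e) = g b - f b * g e := by simp [mul_comm]
    rw [this, hb] at ht
    linarith
  rintro x ⟨a, ha, rfl⟩
  have ha' : g a = 0 := ha
  have h1 : g (a - f a • e) = - (f a * g e) := by simp [ha', mul_comm]
  have h2 : n ∣ f a * g e := by
    have := hdvd a; rw [h1] at this; exact (dvd_neg.mp this)
  have h3 : n ∣ f a := hcop.dvd_of_dvd_mul_right h2
  rw [hn, AddSubgroup.mem_closure_singleton]
  obtain ⟨k, hk⟩ := h3
  exact ⟨k, by rw [smul_eq_mul, mul_comm]; exact hk.symm⟩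

theorem stmt0 (A : Type*) [AddCommGroup A] (f g : A →+ ℤ)
    (hf : Function.Surjective f) (hg : Function.Surjective g) :
    AddSubgroup.map f g.ker = AddSubgroup.map g f.ker :=
  le_antisymm (aux_le A f g hf hg) (aux_le A g f hg hf)
end

section
/- Let A be an abelian group and f, g : A → ℤ be surjective homomorphisms. Then the quotients (ker g)/(ker f ∩ ker g) and (ker f)/(ker f ∩ ker g) are isomorphic. -/
open AddSubgroup

/-- If `g.ker ≤ f.ker` for surjective `f g : A →+ ℤ`, then `f.ker ≤ g.ker`. -/
lemma ker_le_symm {A : Type*} [AddCommGroup A] (f g : A →+ ℤ)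
    (hf : Function.Surjective f) (hg : Function.Surjective g)
    (h : g.ker ≤ f.ker) : f.ker ≤ g.ker := by
  obtain ⟨a, ha⟩ := hg 1
  have key : ∀ x : A, f x = g x * f a := by
    intro x
    have hx : x - g x • a ∈ g.ker := by
      simp [AddMonoidHom.mem_ker, ha]
    have := h hx
    simp only [AddMonoidHom.mem_ker, map_sub, map_zsmul, sub_eq_zero] at this
    simpa [smul_eq_mul] using this
  obtain ⟨b, hb⟩ := hf 1
  have hunit : g b * f a = 1 := by rw [← key]; exact hb
  intro y hy
  have : g y * f a = 0 := by rw [← key]; exact hy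
  rcases mul_eq_zero.mp this with h0 | h0
  · exact h0
  · rw [h0, mul_zero] at hunit; exact absurd hunit.symm one_ne_zero

/-- A nontrivial subgroup of `ℤ` is isomorphic to `ℤ`. -/
lemma int_subgroup_equiv (H : AddSubgroup ℤ) (h : H ≠ ⊥) : Nonempty (H ≃+ ℤ) := by
  obtain ⟨a, ha⟩ := Int.subgroup_cyclic H
  have ha' : H = zmultiples a := by rw [ha, zmultiples_eq_closure]
  have hane : a ≠ 0 := by
    rintro rfl
    apply h
    rw [ha']
    ext x
    simp [mem_zmultiples_iff]
  let e : ℤ →+ ℤ := zmultiplesHom ℤ a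
  have hinj : Function.Injective e := by
    intro x y hxy
    simpa [e, zmultiplesHom, smul_eq_mul, hane] using hxy
  have hrange : e.range = H := by
    rw [ha']
    ext x
    simp [e, mem_zmultiples_iff, AddMonoidHom.mem_range]
  exact ⟨(AddEquiv.addSubgroupCongr hrange).symm.trans (AddMonoidHom.ofInjective hinj).symm⟩

theorem stmt1 (A : Type*) [AddCommGroup A] (f g : A →+ ℤ)
    (hf : Function.Surjective f) (hg : Function.Surjective g) :
    Nonempty ((g.ker ⧸ (f.ker ⊓ g.ker).addSubgroupOf g.ker) ≃+
              (f.ker ⧸ (f.ker ⊓ g.ker).addSubgroupOf f.ker)) := by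
  set φ : g.ker →+ ℤ := f.comp g.ker.subtype with hφ
  set ψ : f.ker →+ ℤ := g.comp f.ker.subtype with hψ
  have hφk : φ.ker = (f.ker ⊓ g.ker).addSubgroupOf g.ker := by
    ext x
    simp [AddMonoidHom.mem_ker, mem_addSubgroupOf, φ, x.2]
  have hψk : ψ.ker = (f.ker ⊓ g.ker).addSubgroupOf f.ker := by
    ext x
    simp [AddMonoidHom.mem_ker, mem_addSubgroupOf, ψ, x.2]
  have e1 : (g.ker ⧸ (f.ker ⊓ g.ker).addSubgroupOf g.ker) ≃+ φ.range :=
    (QuotientAddGroup.quotientAddEquivOfEq hφk.symm).trans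
      (QuotientAddGroup.quotientKerEquivRange φ)
  have e2 : (f.ker ⧸ (f.ker ⊓ g.ker).addSubgroupOf f.ker) ≃+ ψ.range :=
    (QuotientAddGroup.quotientAddEquivOfEq hψk.symm).trans
      (QuotientAddGroup.quotientKerEquivRange ψ)
  have hbot1 : φ.range = ⊥ ↔ g.ker ≤ f.ker := by
    constructor
    · intro hb x hx
      have : φ ⟨x, hx⟩ ∈ φ.range := ⟨_, rfl⟩
      rw [hb] at this
      simpa [φ, AddMonoidHom.mem_ker] using this
    · intro hle
      rw [eq_bot_iff]
      rintro y ⟨x, rfl⟩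
      simpa [φ] using hle x.2
  have hbot2 : ψ.range = ⊥ ↔ f.ker ≤ g.ker := by
    constructor
    · intro hb x hx
      have : ψ ⟨x, hx⟩ ∈ ψ.range := ⟨_, rfl⟩
      rw [hb] at this
      simpa [ψ, AddMonoidHom.mem_ker] using this
    · intro hle
      rw [eq_bot_iff]
      rintro y ⟨x, rfl⟩
      simpa [ψ] using hle x.2
  by_cases hc : g.ker ≤ f.ker
  · have hc' : f.ker ≤ g.ker := ker_le_symm f g hf hg hc
    have h1 : φ.range = ⊥ := hbot1.mpr hc
    have h2 : ψ.range = ⊥ := hbot2.mpr hc'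
    exact ⟨e1.trans ((AddEquiv.addSubgroupCongr (h1.trans h2.symm)).trans e2.symm)⟩
  · have hc' : ¬ f.ker ≤ g.ker := fun h' => hc (ker_le_symm g f hg hf h')
    obtain ⟨i1⟩ := int_subgroup_equiv φ.range (fun h => hc (hbot1.mp h))
    obtain ⟨i2⟩ := int_subgroup_equiv ψ.range (fun h => hc' (hbot2.mp h))
    exact ⟨e1.trans (i1.trans (i2.symm.trans e2.symm))⟩
end

section
/- Let A be an abelian group and f, g : A → ℤ surjective homomorphisms. If ker f ∩ ker g = 0, then ker f is isomorphic to ker g. -/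
-- Every nontrivial subgroup of ℤ is isomorphic to ℤ.
lemma intSubgroupEquiv (H : AddSubgroup ℤ) (hH : H ≠ ⊥) : Nonempty (H ≃+ ℤ) := by
  obtain ⟨a, ha⟩ := Int.subgroup_cyclic H
  have ha' : a ≠ 0 := by
    rintro rfl
    simp [AddSubgroup.closure_singleton_zero] at ha
    exact hH ha
  have hinj : Function.Injective (zmultiplesHom ℤ a) := by
    intro x y hxy
    simp only [zmultiplesHom_apply, smul_eq_mul] at hxy
    exact mul_right_cancel₀ ha' hxy
  have hrange : (zmultiplesHom ℤ a).range = H := by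
    rw [ha]
    ext x
    simp only [AddMonoidHom.mem_range, AddSubgroup.mem_closure_singleton, zmultiplesHom_apply,
      smul_eq_mul]
  exact ⟨((AddMonoidHom.ofInjective hinj).trans
    (AddEquiv.addSubgroupCongr hrange)).symm⟩

-- A subgroup with an injective hom into ℤ: it's iso to its range.
theorem stmt3 (A : Type*) [AddCommGroup A] (f g : A →+ ℤ)
    (hf : Function.Surjective f) (hg : Function.Surjective g)
    (h : f.ker ⊓ g.ker = ⊥) : Nonempty (f.ker ≃+ g.ker) := by
  -- key: ker f = ⊥ → ker g = ⊥
  have key : ∀ (f g : A →+ ℤ), Function.Surjective f → Function.Surjective g →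
      f.ker = ⊥ → g.ker = ⊥ := by
    intro f g hf hg hker
    have hfi : Function.Injective f := (AddMonoidHom.ker_eq_bot_iff f).mp hker
    let e : A ≃+ ℤ := AddEquiv.ofBijective f ⟨hfi, hf⟩
    set φ : ℤ →+ ℤ := g.comp e.symm.toAddMonoidHom with hφ
    have hφs : Function.Surjective φ := hg.comp e.symm.surjective
    obtain ⟨n, hn⟩ := hφs 1
    have hφ1 : ∀ m : ℤ, φ m = m * φ 1 := by
      intro m
      have := map_zsmul φ m (1:ℤ)
      simp only [smul_eq_mul, mul_one] at this
      exact this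
    have hu : n * φ 1 = 1 := by rw [← hφ1]; exact hn
    have hφ1ne : φ 1 ≠ 0 := by rintro h0; rw [h0, mul_zero] at hu; exact one_ne_zero hu.symm
    have hφinj : Function.Injective φ := by
      intro x y hxy
      rw [hφ1 x, hφ1 y] at hxy
      exact mul_right_cancel₀ hφ1ne hxy
    have hginj : Function.Injective g := by
      have : g = φ.comp e.toAddMonoidHom := by
        ext a; simp [φ]
      rw [this]
      exact hφinj.comp e.injective
    exact (AddMonoidHom.ker_eq_bot_iff g).mpr hginj
  by_cases hkf : f.ker = ⊥
  · have hkg : g.ker = ⊥ := key f g hf hg hkf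
    exact ⟨(AddEquiv.addSubgroupCongr hkf).trans (AddEquiv.addSubgroupCongr hkg.symm)⟩
  · have hkg : g.ker ≠ ⊥ := fun hb => hkf (key g f hg hf hb)
    -- g restricted to ker f is injective, so ker f ≅ a nontrivial subgroup of ℤ ≅ ℤ
    have inj : ∀ (f g : A →+ ℤ), f.ker ⊓ g.ker = ⊥ → f.ker ≠ ⊥ →
        Nonempty ((f.ker : AddSubgroup A) ≃+ ℤ) := by
      intro f g h hkf
      set ψ : f.ker →+ ℤ := g.comp f.ker.subtype with hψ
      have hψinj : Function.Injective ψ := by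
        intro a b hxy
        have hmem : (a : A) - b ∈ f.ker ⊓ g.ker := by
          rw [AddSubgroup.mem_inf]
          refine ⟨sub_mem a.2 b.2, ?_⟩
          simp only [AddMonoidHom.mem_ker, map_sub]
          simpa [ψ, sub_eq_zero] using hxy
        rw [h, AddSubgroup.mem_bot, sub_eq_zero] at hmem
        exact Subtype.ext hmem
      have hr : ψ.range ≠ ⊥ := by
        intro hb
        apply hkf
        rw [AddSubgroup.eq_bot_iff_forall]
        intro x hx
        have : ψ ⟨x, hx⟩ = 0 := by
          have : ψ ⟨x, hx⟩ ∈ ψ.range := ⟨⟨x, hx⟩, rfl⟩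
          rwa [hb, AddSubgroup.mem_bot] at this
        have := hψinj (a₁ := ⟨x, hx⟩) (a₂ := 0) (by simpa using this)
        exact congrArg Subtype.val this
      obtain ⟨eq⟩ := intSubgroupEquiv ψ.range hr
      exact ⟨(AddMonoidHom.ofInjective hψinj).trans eq⟩
    obtain ⟨e1⟩ := inj f g h hkf
    obtain ⟨e2⟩ := inj g f (by rwa [inf_comm]) hkg
    exact ⟨e1.trans e2.symm⟩
end

section
/- There is no n ∈ ℤ × ℤ of the form (a, b) with a = ±1 and 2a − 5b = ±1; consequently, the subgroups of ℤ² generated by (0,1) and by (5,2) have no common complementary summand, even though the subgroups generated by (1,0) and (7,3) are complements of them respectively. -/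
/-!
A complement `C` of the kernel of a surjection `f : ℤ² → ℤ` is mapped isomorphically onto `ℤ`
by `f`. Both `⟨(0,1)⟩` and `⟨(5,2)⟩` are such kernels, of `p ↦ p.1` and `p ↦ 2 p.1 - 5 p.2`. A
common complement `C` would therefore contain the element `c` with `c.1 = 1`, and the second map,
being another isomorphism `C ≃ ℤ`, would send it to `±1`; but `2 - 5 c.2 ≡ 2 (mod 5)`.
-/

open Function

section Complement

variable {G H : Type*} [AddCommGroup G] [AddGroup H]

theorem AddMonoidHom.bijective_comp_subtype_of_isCompl_ker {f : G →+ H} (hf : Surjective f)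
    {C : AddSubgroup G} (hC : IsCompl f.ker C) : Bijective (f.comp C.subtype) := by
  constructor
  · rw [injective_iff_map_eq_zero]
    rintro ⟨c, hc⟩ hfc
    have hmem : c ∈ f.ker ⊓ C := ⟨hfc, hc⟩
    rw [hC.inf_eq_bot, AddSubgroup.mem_bot] at hmem
    exact Subtype.ext hmem
  · intro y
    obtain ⟨x, rfl⟩ := hf y
    obtain ⟨k, hk, c, hc, rfl⟩ := AddSubgroup.mem_sup.1 (hC.sup_eq_top ▸ AddSubgroup.mem_top x)
    refine ⟨⟨c, hc⟩, ?_⟩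
    simp [AddMonoidHom.mem_ker.1 hk]

theorem exists_eq_one_and_eq_one_or_neg_one_of_isCompl_ker {f g : G →+ ℤ}
    (hf : Surjective f) (hg : Surjective g) {C : AddSubgroup G}
    (hfC : IsCompl f.ker C) (hgC : IsCompl g.ker C) :
    ∃ c, f c = 1 ∧ (g c = 1 ∨ g c = -1) := by
  let ef := AddEquiv.ofBijective _ (f.bijective_comp_subtype_of_isCompl_ker hf hfC)
  let eg := AddEquiv.ofBijective _ (g.bijective_comp_subtype_of_isCompl_ker hg hgC)
  refine ⟨ef.symm 1, ef.apply_symm_apply 1, ?_⟩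
  rcases Int.addEquiv_eq_refl_or_neg (ef.symm.trans eg) with h | h
  · exact .inl (DFunLike.congr_fun h 1)
  · exact .inr (DFunLike.congr_fun h 1)

end Complement

section Wedge

def wedge (v : ℤ × ℤ) : ℤ × ℤ →+ ℤ where
  toFun p := p.1 * v.2 - p.2 * v.1
  map_zero' := by simp
  map_add' p q := by simp only [Prod.fst_add, Prod.snd_add]; ring

theorem wedge_apply (v p : ℤ × ℤ) : wedge v p = p.1 * v.2 - p.2 * v.1 := rfl

theorem wedge_surjective {v : ℤ × ℤ} (hv : IsCoprime v.1 v.2) : Surjective (wedge v) := by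
  obtain ⟨a, b, hab⟩ := hv
  intro n
  exact ⟨(n * b, -(n * a)), by rw [wedge_apply]; linear_combination n * hab⟩

theorem ker_wedge {v : ℤ × ℤ} (hv : IsCoprime v.1 v.2) :
    (wedge v).ker = AddSubgroup.zmultiples v := by
  obtain ⟨a, b, hab⟩ := hv
  ext p
  rw [AddMonoidHom.mem_ker, AddSubgroup.mem_zmultiples_iff, wedge_apply]
  constructor
  · intro hp
    refine ⟨a * p.1 + b * p.2, Prod.ext ?_ ?_⟩
    · simp only [Prod.smul_fst, smul_eq_mul]
      linear_combination p.1 * hab - b * hp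
    · simp only [Prod.smul_snd, smul_eq_mul]
      linear_combination p.2 * hab + a * hp
  · rintro ⟨k, rfl⟩
    simp only [Prod.smul_fst, Prod.smul_snd, smul_eq_mul]
    ring

theorem isCompl_zmultiples_of_isUnit_wedge {u v : ℤ × ℤ} (huv : IsUnit (wedge v u)) :
    IsCompl (AddSubgroup.zmultiples u) (AddSubgroup.zmultiples v) := by
  obtain ⟨d, hd⟩ := huv
  constructor
  · rw [AddSubgroup.disjoint_def]
    rintro _ ⟨m, rfl⟩ hv
    have hwedge : m * wedge v u = 0 := by
      obtain ⟨n, hn⟩ := hv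
      rw [← smul_eq_mul, ← map_zsmul, ← show n • v = m • u from hn, map_zsmul, wedge_apply]
      simp only [smul_eq_mul]
      ring
    rw [← hd] at hwedge
    simp [(mul_eq_zero.1 hwedge).resolve_right d.ne_zero]
  · rw [codisjoint_iff, eq_top_iff]
    rintro p -
    -- Cramer's rule, with `d * d = 1`.
    refine AddSubgroup.mem_sup.2 ⟨(d * wedge v p) • u, zsmul_mem (AddSubgroup.mem_zmultiples u) _,
      (d * wedge p u) • v, zsmul_mem (AddSubgroup.mem_zmultiples v) _, ?_⟩
    have hdd : (d : ℤ) * d = 1 := by rcases Int.units_eq_one_or d with h | h <;> simp [h]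
    rw [wedge_apply] at hd
    ext <;> simp only [wedge_apply, Prod.fst_add, Prod.snd_add, Prod.smul_fst, Prod.smul_snd,
      smul_eq_mul]
    · linear_combination p.1 * hdd - d * p.1 * hd
    · linear_combination p.2 * hdd - d * p.2 * hd

end Wedge

theorem stmt5 :
    (¬ ∃ a b : ℤ, (a = 1 ∨ a = -1) ∧ (2 * a - 5 * b = 1 ∨ 2 * a - 5 * b = -1)) ∧
    IsCompl (AddSubgroup.closure {((1 : ℤ), (0 : ℤ))}) (AddSubgroup.closure {((0 : ℤ), (1 : ℤ))}) ∧
    IsCompl (AddSubgroup.closure {((7 : ℤ), (3 : ℤ))}) (AddSubgroup.closure {((5 : ℤ), (2 : ℤ))}) ∧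
    ¬ ∃ C : AddSubgroup (ℤ × ℤ),
        IsCompl (AddSubgroup.closure {((0 : ℤ), (1 : ℤ))}) C ∧
        IsCompl (AddSubgroup.closure {((5 : ℤ), (2 : ℤ))}) C := by
  have no_solution : ¬ ∃ a b : ℤ, (a = 1 ∨ a = -1) ∧ (2 * a - 5 * b = 1 ∨ 2 * a - 5 * b = -1) := by
    rintro ⟨a, b, ha, hab⟩
    omega
  have h01 : IsCoprime (0 : ℤ) 1 := isCoprime_zero_left.2 isUnit_one
  have h52 : IsCoprime (5 : ℤ) 2 := ⟨1, -2, by norm_num⟩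
  simp only [← AddSubgroup.zmultiples_eq_closure]
  refine ⟨no_solution, isCompl_zmultiples_of_isUnit_wedge (by simp [wedge_apply]),
    isCompl_zmultiples_of_isUnit_wedge (Int.isUnit_iff.2 (by norm_num [wedge_apply])), ?_⟩
  rintro ⟨C, h01C, h52C⟩
  rw [← ker_wedge h01] at h01C
  rw [← ker_wedge h52] at h52C
  obtain ⟨c, hc1, hc2⟩ := exists_eq_one_and_eq_one_or_neg_one_of_isCompl_ker
    (wedge_surjective h01) (wedge_surjective h52) h01C h52C
  simp only [wedge_apply] at hc1 hc2
  exact no_solution ⟨c.1, c.2, by omega, by omega⟩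
end

section
/- Let A₀ ⊆ A₁ ⊆ ℤ³ with A₀ generated by (1,3,0), (3,1,0) and A₁ generated by (1,0,−24), (0,1,8), (0,0,64). Let f, g : ℤ³ → ℤ be the first and second coordinate projections. There is no triple of group isomorphisms φᵢ : ker f ∩ Aᵢ → ker g ∩ Aᵢ (i = 0,1,2, with A₂ = ℤ³) such that φ₁ restricts to φ₀ and φ₂ restricts to φ₁. -/
/-- First-coordinate projection `ℤ³ → ℤ`. -/
def f : ℤ × ℤ × ℤ →+ ℤ := AddMonoidHom.fst ℤ (ℤ × ℤ)

/-- Second-coordinate projection `ℤ³ → ℤ`. -/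
def g : ℤ × ℤ × ℤ →+ ℤ := (AddMonoidHom.fst ℤ ℤ).comp (AddMonoidHom.snd ℤ (ℤ × ℤ))

/-- The subgroup `A₀` of `ℤ³`. -/
def A0 : AddSubgroup (ℤ × ℤ × ℤ) := AddSubgroup.closure {(1, 3, 0), (3, 1, 0)}

/-- The subgroup `A₁` of `ℤ³`. -/
def A1 : AddSubgroup (ℤ × ℤ × ℤ) := AddSubgroup.closure {(1, 0, -24), (0, 1, 8), (0, 0, 64)}


/-!
In the coordinates `(b, c)` on `ker f` and `(a, c)` on `ker g`, the isomorphism `φ₂` is an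
invertible integer matrix. Compatibility with `A₀` sends `(0, 8, 0)` into `A₀ ⊆ {c = 0}`, so this
matrix is upper triangular and its diagonal entries `s, q` are `±1`. Compatibility with `A₁` sends
`(0, 1, 8)` into `A₁ ⊆ {64 ∣ c + 24a - 8b}`, which forces `8 ∣ q + 3s`: impossible for `s, q = ±1`.
-/

lemma LinearMap.map_eq_smul_add_smul {R M : Type*} [Semiring R] [AddCommMonoid M] [Module R M]
    (ψ : R × R →ₗ[R] M) (x : R × R) : ψ x = x.1 • ψ (1, 0) + x.2 • ψ (0, 1) := by
  conv_lhs => rw [show x = x.1 • ((1 : R), (0 : R)) + x.2 • ((0 : R), (1 : R)) by ext <;> simp]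
  rw [map_add, map_smul, map_smul]

lemma LinearEquiv.isUnit_diag_of_upperTriangular {R : Type*} [CommRing R]
    (ψ : (R × R) ≃ₗ[R] (R × R)) (h : (ψ (1, 0)).2 = 0) :
    IsUnit (ψ (1, 0)).1 ∧ IsUnit (ψ (0, 1)).2 := by
  have hψ := ψ.toLinearMap.map_eq_smul_add_smul
  obtain ⟨x, hx⟩ := ψ.surjective (0, 1)
  obtain ⟨y, hy⟩ := ψ.surjective (1, 0)
  rw [← ψ.coe_toLinearMap, hψ] at hx hy
  simp only [LinearEquiv.coe_coe, Prod.ext_iff, Prod.fst_add, Prod.snd_add, Prod.smul_fst,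
    Prod.smul_snd, smul_eq_mul, h, mul_zero, zero_add] at hx hy
  have hy₂ : y.2 = 0 := by
    calc y.2 = y.2 * ((ψ (0, 1)).2 * x.2) := by rw [mul_comm _ x.2, hx.2, mul_one]
      _ = 0 := by rw [← mul_assoc, hy.2, zero_mul]
  rw [hy₂, zero_mul, add_zero] at hy
  exact ⟨.of_mul_eq_one_right _ hy.1, .of_mul_eq_one_right _ hx.2⟩

lemma not_dvd_of_upperTriangular (ψ : (ℤ × ℤ) ≃ₗ[ℤ] (ℤ × ℤ)) (h : (ψ (8, 0)).2 = 0) :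
    ¬ (64 : ℤ) ∣ (ψ (1, 8)).2 + 24 * (ψ (1, 8)).1 := by
  have hψ := ψ.toLinearMap.map_eq_smul_add_smul
  have h₁₀ : (ψ (1, 0)).2 = 0 := by
    rw [← ψ.coe_toLinearMap, hψ] at h
    simpa using h
  obtain ⟨hs, hq⟩ := ψ.isUnit_diag_of_upperTriangular h₁₀
  rw [← ψ.coe_toLinearMap, hψ]
  simp only [LinearEquiv.coe_coe, Prod.fst_add, Prod.snd_add, Prod.smul_fst, Prod.smul_snd,
    smul_eq_mul, h₁₀]
  rcases Int.isUnit_iff.mp hs with hs | hs <;> rcases Int.isUnit_iff.mp hq with hq | hq <;>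
    omega

def kerFEquiv : f.ker ≃+ ℤ × ℤ where
  toFun x := x.1.2
  invFun y := ⟨(0, y), rfl⟩
  left_inv x := Subtype.ext (Prod.ext x.2.symm rfl)
  right_inv _ := rfl
  map_add' _ _ := rfl

def kerGEquiv : g.ker ≃+ ℤ × ℤ where
  toFun x := (x.1.1, x.1.2.2)
  invFun y := ⟨(y.1, 0, y.2), rfl⟩
  left_inv x := Subtype.ext (Prod.ext rfl (Prod.ext x.2.symm rfl))
  right_inv _ := rfl
  map_add' _ _ := rfl

lemma A0_le_A1 : A0 ≤ A1 := by
  have h₁ : ((1 : ℤ), (0 : ℤ), (-24 : ℤ)) ∈ A1 := AddSubgroup.subset_closure (by simp)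
  have h₂ : ((0 : ℤ), (1 : ℤ), (8 : ℤ)) ∈ A1 := AddSubgroup.subset_closure (by simp)
  have h₃ : ((0 : ℤ), (0 : ℤ), (64 : ℤ)) ∈ A1 := AddSubgroup.subset_closure (by simp)
  rw [A0, AddSubgroup.closure_le]
  rintro x (rfl | rfl)
  · rw [SetLike.mem_coe, show ((1 : ℤ), (3 : ℤ), (0 : ℤ)) = (1, 0, -24) + (3 : ℤ) • (0, 1, 8) by
      decide]
    exact A1.add_mem h₁ (A1.zsmul_mem h₂ 3)
  · rw [SetLike.mem_coe, show ((3 : ℤ), (1 : ℤ), (0 : ℤ)) =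
      (3 : ℤ) • (1, 0, -24) + (0, 1, 8) + (0, 0, 64) by decide]
    exact A1.add_mem (A1.add_mem (A1.zsmul_mem h₁ 3) h₂) h₃

lemma snd_snd_eq_zero_of_mem_A0 {x : ℤ × ℤ × ℤ} (hx : x ∈ A0) : x.2.2 = 0 := by
  induction hx using AddSubgroup.closure_induction with
  | mem x hx => rcases hx with rfl | rfl <;> rfl
  | zero => rfl
  | add x y _ _ hx hy => simp [hx, hy]
  | neg x _ hx => simp [hx]

lemma dvd_of_mem_A1 {x : ℤ × ℤ × ℤ} (hx : x ∈ A1) : (64 : ℤ) ∣ x.2.2 + 24 * x.1 - 8 * x.2.1 := by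
  induction hx using AddSubgroup.closure_induction with
  | mem x hx => rcases hx with rfl | rfl | rfl <;> decide
  | zero => decide
  | add x y _ _ hx hy => simp only [Prod.fst_add, Prod.snd_add]; omega
  | neg x _ hx => simp only [Prod.fst_neg, Prod.snd_neg]; omega

theorem stmt8 :
    ¬ ∃ (φ0 : (f.ker ⊓ A0 : AddSubgroup (ℤ × ℤ × ℤ)) ≃+ (g.ker ⊓ A0 : AddSubgroup (ℤ × ℤ × ℤ)))
      (φ1 : (f.ker ⊓ A1 : AddSubgroup (ℤ × ℤ × ℤ)) ≃+ (g.ker ⊓ A1 : AddSubgroup (ℤ × ℤ × ℤ)))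
      (φ2 : f.ker ≃+ g.ker),
      (∀ (x : ℤ × ℤ × ℤ) (h0 : x ∈ f.ker ⊓ A0) (h1 : x ∈ f.ker ⊓ A1),
        ((φ1 ⟨x, h1⟩ : ℤ × ℤ × ℤ)) = ((φ0 ⟨x, h0⟩ : ℤ × ℤ × ℤ))) ∧
      (∀ (x : ℤ × ℤ × ℤ) (h1 : x ∈ f.ker ⊓ A1) (h2 : x ∈ f.ker),
        ((φ2 ⟨x, h2⟩ : ℤ × ℤ × ℤ)) = ((φ1 ⟨x, h1⟩ : ℤ × ℤ × ℤ))) := by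
  rintro ⟨φ0, φ1, φ2, h01, h12⟩
  have maps_A1 (x : ℤ × ℤ × ℤ) (hx : x ∈ f.ker ⊓ A1) : (φ2 ⟨x, hx.1⟩ : ℤ × ℤ × ℤ) ∈ A1 :=
    h12 x hx hx.1 ▸ (φ1 ⟨x, hx⟩).2.2
  have maps_A0 (x : ℤ × ℤ × ℤ) (hx : x ∈ f.ker ⊓ A0) : (φ2 ⟨x, hx.1⟩ : ℤ × ℤ × ℤ) ∈ A0 := by
    have hx₁ : x ∈ f.ker ⊓ A1 := ⟨hx.1, A0_le_A1 hx.2⟩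
    rw [h12 x hx₁ hx.1, h01 x hx hx₁]
    exact (φ0 ⟨x, hx⟩).2.2
  have h808 : ((0 : ℤ), (8 : ℤ), (0 : ℤ)) ∈ A0 := by
    rw [show ((0 : ℤ), (8 : ℤ), (0 : ℤ)) = (3 : ℤ) • (1, 3, 0) - (3, 1, 0) by decide]
    exact A0.sub_mem (A0.zsmul_mem (AddSubgroup.subset_closure (by simp)) 3)
      (AddSubgroup.subset_closure (by simp))
  have h018 : ((0 : ℤ), (1 : ℤ), (8 : ℤ)) ∈ A1 := AddSubgroup.subset_closure (by simp)
  refine not_dvd_of_upperTriangular (kerFEquiv.symm.trans (φ2.trans kerGEquiv)).toIntLinearEquiv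
    ?_ ?_
  · exact snd_snd_eq_zero_of_mem_A0 (maps_A0 (0, 8, 0) ⟨rfl, h808⟩)
  · have h := dvd_of_mem_A1 (maps_A1 (0, 1, 8) ⟨rfl, h018⟩)
    rwa [show (φ2 ⟨(0, 1, 8), rfl⟩ : ℤ × ℤ × ℤ).2.1 = 0 from (φ2 _).2, mul_zero, sub_zero] at h
end

section
/- Let A₁ be the subgroup of ℤ³ generated by (1,0,−24), (0,1,8), (0,0,64), with A₀ as above and f,g the coordinate projections. Then A₁ is the internal direct sum of (ker f ∩ A₁) and the cyclic subgroup generated by (1,3,0), and also the internal direct sum of (ker g ∩ A₁) and the cyclic subgroup generated by (3,1,0). -/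
namespace AddMonoidHom

variable {G : Type*} [AddGroup G] (φ : G →+ ℤ) {v : G}

theorem ker_inf_closure_singleton_eq_bot (hv : φ v = 1) :
    φ.ker ⊓ AddSubgroup.closure {v} = ⊥ := by
  refine eq_bot_iff.mpr fun x ⟨hx, hxv⟩ => ?_
  obtain ⟨n, rfl⟩ := AddSubgroup.mem_closure_singleton.mp hxv
  have hn : n = 0 := by simpa [hv] using φ.mem_ker.mp hx
  simp [hn]

theorem ker_inf_sup_closure_singleton_eq (H : AddSubgroup G) (hvH : v ∈ H) (hv : φ v = 1) :
    (φ.ker ⊓ H) ⊔ AddSubgroup.closure {v} = H := by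
  have hclosure : AddSubgroup.closure {v} ≤ H :=
    (AddSubgroup.closure_le H).mpr (Set.singleton_subset_iff.mpr hvH)
  refine le_antisymm (sup_le inf_le_right hclosure) fun x hx => ?_
  have hker : x - φ x • v ∈ φ.ker ⊓ H :=
    ⟨φ.mem_ker.mpr (by simp [hv]), H.sub_mem hx (H.zsmul_mem hvH _)⟩
  have hspan : φ x • v ∈ AddSubgroup.closure {v} :=
    AddSubgroup.mem_closure_singleton.mpr ⟨φ x, rfl⟩
  simpa using AddSubgroup.add_mem_sup hker hspan

end AddMonoidHom

theorem mem_A1_one_three_zero : ((1, 3, 0) : ℤ × ℤ × ℤ) ∈ A1 := by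
  have h : ((1, 3, 0) : ℤ × ℤ × ℤ) = (1, 0, -24) + (3 : ℤ) • (0, 1, 8) := by decide
  rw [h]
  exact add_mem (AddSubgroup.subset_closure (by simp))
    (zsmul_mem (AddSubgroup.subset_closure (by simp)) _)

theorem mem_A1_three_one_zero : ((3, 1, 0) : ℤ × ℤ × ℤ) ∈ A1 := by
  have h : ((3, 1, 0) : ℤ × ℤ × ℤ) = (3 : ℤ) • (1, 0, -24) + (0, 1, 8) + (0, 0, 64) := by
    decide
  rw [h]
  exact add_mem (add_mem (zsmul_mem (AddSubgroup.subset_closure (by simp)) _)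
    (AddSubgroup.subset_closure (by simp))) (AddSubgroup.subset_closure (by simp))

theorem stmt11 :
    ((f.ker ⊓ A1) ⊓ AddSubgroup.closure {((1, 3, 0) : ℤ × ℤ × ℤ)} = ⊥ ∧
     (f.ker ⊓ A1) ⊔ AddSubgroup.closure {((1, 3, 0) : ℤ × ℤ × ℤ)} = A1) ∧
    ((g.ker ⊓ A1) ⊓ AddSubgroup.closure {((3, 1, 0) : ℤ × ℤ × ℤ)} = ⊥ ∧
     (g.ker ⊓ A1) ⊔ AddSubgroup.closure {((3, 1, 0) : ℤ × ℤ × ℤ)} = A1) := by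
  have hf : f (1, 3, 0) = 1 := rfl
  have hg : g (3, 1, 0) = 1 := rfl
  refine ⟨⟨?_, f.ker_inf_sup_closure_singleton_eq A1 mem_A1_one_three_zero hf⟩,
    ?_, g.ker_inf_sup_closure_singleton_eq A1 mem_A1_three_one_zero hg⟩
  · exact eq_bot_mono (inf_le_inf_right _ inf_le_left) (f.ker_inf_closure_singleton_eq_bot hf)
  · exact eq_bot_mono (inf_le_inf_right _ inf_le_left) (g.ker_inf_closure_singleton_eq_bot hg)
end

section
/- Let A₀ be the subgroup of ℤ³ generated by (1,3,0) and (3,1,0), and f, g the first and second coordinate projections. Then A₀ is the internal direct sum of (ker f ∩ A₀) and ⟨(1,3,0)⟩, and also the internal direct sum of (ker g ∩ A₀) and ⟨(3,1,0)⟩. -/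
theorem stmt12 :
    ((f.ker ⊓ A0) ⊓ AddSubgroup.closure {((1, 3, 0) : ℤ × ℤ × ℤ)} = ⊥ ∧
     (f.ker ⊓ A0) ⊔ AddSubgroup.closure {((1, 3, 0) : ℤ × ℤ × ℤ)} = A0) ∧
    ((g.ker ⊓ A0) ⊓ AddSubgroup.closure {((3, 1, 0) : ℤ × ℤ × ℤ)} = ⊥ ∧
     (g.ker ⊓ A0) ⊔ AddSubgroup.closure {((3, 1, 0) : ℤ × ℤ × ℤ)} = A0) := by
  have hu : ((1,3,0) : ℤ × ℤ × ℤ) ∈ A0 := AddSubgroup.subset_closure (by simp)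
  have hv : ((3,1,0) : ℤ × ℤ × ℤ) ∈ A0 := AddSubgroup.subset_closure (by simp)
  have h8f : ((0,-8,0) : ℤ × ℤ × ℤ) ∈ f.ker ⊓ A0 := by
    constructor
    · exact AddMonoidHom.mem_ker.mpr rfl
    · have heq : ((0,-8,0) : ℤ × ℤ × ℤ) = (3,1,0) - (3:ℤ) • (1,3,0) := by
        simp [Prod.ext_iff]
      rw [heq]
      exact A0.sub_mem hv (A0.zsmul_mem hu 3)
  have h8g : ((-8,0,0) : ℤ × ℤ × ℤ) ∈ g.ker ⊓ A0 := by
    constructor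
    · exact AddMonoidHom.mem_ker.mpr rfl
    · have heq : ((-8,0,0) : ℤ × ℤ × ℤ) = (1,3,0) - (3:ℤ) • (3,1,0) := by
        simp [Prod.ext_iff]
      rw [heq]
      exact A0.sub_mem hu (A0.zsmul_mem hv 3)
  refine ⟨⟨?_, ?_⟩, ?_, ?_⟩
  · rw [eq_bot_iff]
    intro x hx
    obtain ⟨⟨hf, -⟩, hc⟩ := AddSubgroup.mem_inf.mp hx
    rw [AddSubgroup.mem_closure_singleton] at hc
    obtain ⟨n, rfl⟩ := hc
    have hn : n = 0 := by simpa [f] using AddMonoidHom.mem_ker.mp hf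
    simp [hn, AddSubgroup.mem_bot]
  · apply le_antisymm
    · exact sup_le inf_le_right
        ((AddSubgroup.closure_le _).mpr (by simpa using hu))
    · rw [A0]
      apply (AddSubgroup.closure_le _).mpr
      intro x hx
      simp only [Set.mem_insert_iff, Set.mem_singleton_iff] at hx
      rcases hx with rfl | rfl
      · exact AddSubgroup.mem_sup_right (AddSubgroup.subset_closure rfl)
      · have heq : ((3,1,0) : ℤ × ℤ × ℤ) = (0,-8,0) + (3:ℤ) • (1,3,0) := by
          simp [Prod.ext_iff]
        rw [heq]
        exact AddSubgroup.add_mem _ (AddSubgroup.mem_sup_left h8f)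
          (AddSubgroup.mem_sup_right
            (AddSubgroup.mem_closure_singleton.mpr ⟨3, rfl⟩))
  · rw [eq_bot_iff]
    intro x hx
    obtain ⟨⟨hg, -⟩, hc⟩ := AddSubgroup.mem_inf.mp hx
    rw [AddSubgroup.mem_closure_singleton] at hc
    obtain ⟨n, rfl⟩ := hc
    have hn : n = 0 := by simpa [g] using AddMonoidHom.mem_ker.mp hg
    simp [hn, AddSubgroup.mem_bot]
  · apply le_antisymm
    · exact sup_le inf_le_right
        ((AddSubgroup.closure_le _).mpr (by simpa using hv))
    · rw [A0]
      apply (AddSubgroup.closure_le _).mpr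
      intro x hx
      simp only [Set.mem_insert_iff, Set.mem_singleton_iff] at hx
      rcases hx with rfl | rfl
      · have heq : ((1,3,0) : ℤ × ℤ × ℤ) = (-8,0,0) + (3:ℤ) • (3,1,0) := by
          simp [Prod.ext_iff]
        rw [heq]
        exact AddSubgroup.add_mem _ (AddSubgroup.mem_sup_left h8g)
          (AddSubgroup.mem_sup_right
            (AddSubgroup.mem_closure_singleton.mpr ⟨3, rfl⟩))
      · exact AddSubgroup.mem_sup_right (AddSubgroup.subset_closure rfl)
end

section
/- Let B be an abelian group such that every nonzero homomorphism from B to ℤ is injective. If f : B ⊕ ℤ → ℤ is a surjective homomorphism, then ker f is isomorphic to mB for some positive integer m, where mB = {mb : b ∈ B}. -/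
/-!
Let `φ = f ∘ inl : B →+ ℤ`. If `φ = 0`, then `f` factors through the second projection by a map
`ℤ →+ ℤ` which is nonzero because `f` is onto, hence injective; so `ker f = B × 0 ≅ B`.
Otherwise `φ` is injective by hypothesis, so `B` embeds in `ℤ` and is infinite cyclic. Injectivity of
`φ` also makes the second projection injective on `ker f`, which contains `(f(0,1) • b, -φ b) ≠ 0`
for any `b` with `φ b ≠ 0`; so `ker f` is infinite cyclic as well. Either way `ker f ≅ B = 1 • B`.
-/

open Function AddMonoidHom

theorem AddMonoidHom.nonempty_addEquiv_int_of_injective {G : Type*} [AddGroup G] [Nontrivial G]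
    {φ : G →+ ℤ} (hφ : Injective φ) : Nonempty (G ≃+ ℤ) := by
  have : IsAddCyclic G := isAddCyclic_of_injective φ hφ
  obtain ⟨g, hg⟩ := exists_ne (0 : G)
  have hφg : φ g ≠ 0 := fun h => hg (hφ (h.trans (map_zero φ).symm))
  have : Infinite G := Infinite.of_injective (· • g) fun m n hmn =>
    mul_right_cancel₀ hφg (by simpa using congrArg φ hmn)
  exact ⟨intCyclicAddEquiv.symm⟩

theorem AddMonoidHom.injective_int_of_ne_zero {ψ : ℤ →+ ℤ} (hψ : ψ ≠ 0) : Injective ψ := by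
  have h1 : ψ 1 ≠ 0 := fun h => hψ (ext_int h)
  have hmul : ∀ k, ψ k = k * ψ 1 := fun k => by
    rw [← smul_eq_mul, ← map_zsmul, smul_eq_mul, mul_one]
  intro m n hmn
  rw [hmul m, hmul n] at hmn
  exact mul_right_cancel₀ h1 hmn

theorem AddMonoidHom.range_zsmulAddGroupHom_one (B : Type*) [AddCommGroup B] :
    (zsmulAddGroupHom 1 : B →+ B).range = ⊤ :=
  range_eq_top.mpr fun b => ⟨b, one_zsmul b⟩

section Prod

variable {M N P : Type*} [AddCommGroup M] [AddCommGroup N] [AddCommGroup P]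

def AddMonoidHom.kerSndAddEquiv : (snd M N).ker ≃+ M :=
  (AddEquiv.addSubgroupCongr (ker_snd (G := M) (G' := N))).trans
    ((AddSubgroup.prodEquiv ⊤ ⊥).trans (AddEquiv.prodUnique.trans AddSubgroup.topEquiv))

theorem AddMonoidHom.ker_eq_ker_snd {f : M × N →+ P} (hinl : f.comp (inl M N) = 0)
    (hinr : Injective (f.comp (inr M N))) : f.ker = (snd M N).ker := by
  ext x
  rw [← coprod_unique f, hinl]
  simp only [mem_ker, coprod_apply, zero_apply, zero_add, coe_snd]
  exact (injective_iff_map_eq_zero' _).mp hinr x.2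

theorem AddMonoidHom.injective_snd_comp_ker_subtype {f : M × N →+ P}
    (hinl : Injective (f.comp (inl M N))) : Injective ((snd M N).comp f.ker.subtype) := by
  rw [injective_iff_map_eq_zero]
  rintro ⟨⟨m, n⟩, hx⟩ (rfl : n = 0)
  have hm : m = 0 := (injective_iff_map_eq_zero _).mp hinl m hx
  simp [hm]

end Prod

theorem AddMonoidHom.nontrivial_ker_of_comp_inl_ne_zero {B : Type*} [AddCommGroup B]
    {f : B × ℤ →+ ℤ} (hinl : f.comp (inl B ℤ) ≠ 0) : Nontrivial f.ker := by
  obtain ⟨b, hb⟩ := DFunLike.ne_iff.mp hinl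
  have hmem : (f (0, 1) • b, -f (b, 0)) ∈ f.ker := by
    have hsplit : (f (0, 1) • b, -f (b, 0)) =
        f (0, 1) • (b, 0) + (-f (b, 0)) • ((0 : B), (1 : ℤ)) := by
      simp
    rw [mem_ker, hsplit, map_add, map_zsmul, map_zsmul, smul_eq_mul, smul_eq_mul]
    ring
  exact nontrivial_of_ne ⟨_, hmem⟩ 0 fun h => hb (by simpa using congrArg (·.1.2) h)

theorem stmt15 (B : Type*) [AddCommGroup B]
    (hB : ∀ φ : B →+ ℤ, φ ≠ 0 → Function.Injective φ)
    (f : B × ℤ →+ ℤ) (hf : Function.Surjective f) :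
    ∃ m : ℤ, 0 < m ∧ Nonempty (f.ker ≃+ (zsmulAddGroupHom m : B →+ B).range) := by
  refine ⟨1, one_pos, ?_⟩
  suffices e : Nonempty (f.ker ≃+ B) by
    rw [range_zsmulAddGroupHom_one]
    exact e.map (·.trans AddSubgroup.topEquiv.symm)
  by_cases hinl : f.comp (inl B ℤ) = 0
  · have hinr : f.comp (inr B ℤ) ≠ 0 := fun hinr => by
      obtain ⟨x, hx⟩ := hf 1
      rw [← coprod_unique f, hinl, hinr] at hx
      simp at hx
    exact ⟨(AddEquiv.addSubgroupCongr (ker_eq_ker_snd hinl (injective_int_of_ne_zero hinr))).trans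
      kerSndAddEquiv⟩
  · have hφ := hB _ hinl
    have : Nontrivial B := by
      obtain ⟨b, hb⟩ := DFunLike.ne_iff.mp hinl
      exact nontrivial_of_ne b 0 fun h => hb (by rw [h, map_zero, AddMonoidHom.zero_apply])
    have : Nontrivial f.ker := nontrivial_ker_of_comp_inl_ne_zero hinl
    obtain ⟨eB⟩ := nonempty_addEquiv_int_of_injective hφ
    obtain ⟨eK⟩ := nonempty_addEquiv_int_of_injective (injective_snd_comp_ker_subtype hφ)
    exact ⟨eK.trans eB.symm⟩
end

section
/- Let B be a torsion-free abelian group such that every nonzero homomorphism from B to ℤ is injective. If f : B ⊕ ℤ → ℤ is a surjective homomorphism, then ker f is isomorphic to B. -/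
/-!
Write `f (b, k) = φ b + k * n` with `φ : B →+ ℤ` and `n = f (0, 1)`, and pick `(c, j)` with
`φ c + j * n = 1`. The hypothesis on `B` forces `φ b • c = φ c • b` for all `b, c` (trivially if
`φ = 0`, by injectivity of `φ` otherwise), so every `b` is recovered as `b = φ b • c + (j * n) • b`.
Hence `b ↦ (n • b, -φ b)` is an isomorphism of `B` onto `ker f`, with inverse
`(a, k) ↦ j • a - k • c`.
-/

/-- The torsion-free predicate as defined in the older Mathlib (removed since). -/
def AddMonoid.IsTorsionFree (G : Type*) [AddMonoid G] : Prop :=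
  ∀ g : G, g ≠ 0 → ¬IsOfFinAddOrder g

namespace AddMonoidHom

variable {B : Type*} [AddCommGroup B]

theorem zsmul_comm_of_injective_of_ne_zero (φ : B →+ ℤ) (hφ : φ ≠ 0 → Function.Injective φ)
    (b c : B) : φ b • c = φ c • b := by
  by_cases h0 : φ = 0
  · simp [h0]
  · apply hφ h0
    simp only [map_zsmul, smul_eq_mul, mul_comm]

theorem apply_eq_comp_inl_add_mul (f : B × ℤ →+ ℤ) (x : B × ℤ) :
    f x = f.comp (inl B ℤ) x.1 + x.2 * f (0, 1) := by
  have hx : x = (x.1, 0) + x.2 • ((0 : B), (1 : ℤ)) := by ext <;> simp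
  conv_lhs => rw [hx, map_add, map_zsmul]
  rfl

section KernelOfProdInt

variable (f : B × ℤ →+ ℤ)

def toKerProdInt : B →+ f.ker :=
  ((f (0, 1) • AddMonoidHom.id B).prod (-f.comp (inl B ℤ))).codRestrict f.ker fun b => by
    rw [mem_ker, apply_eq_comp_inl_add_mul]
    simp [map_zsmul, mul_comm]

@[simp]
theorem coe_toKerProdInt (b : B) :
    (f.toKerProdInt b : B × ℤ) = (f (0, 1) • b, -f.comp (inl B ℤ) b) :=
  rfl

variable {f} (hcomm : ∀ b c : B, f.comp (inl B ℤ) b • c = f.comp (inl B ℤ) c • b)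
include hcomm

theorem eq_zsmul_add_zsmul_of_apply_eq_one {c : B} {j : ℤ} (hcj : f (c, j) = 1) (b : B) :
    b = f.comp (inl B ℤ) b • c + (j * f (0, 1)) • b := by
  rw [apply_eq_comp_inl_add_mul] at hcj
  rw [hcomm, ← add_smul, hcj, one_smul]

theorem bijective_toKerProdInt (hf : Function.Surjective f) :
    Function.Bijective f.toKerProdInt := by
  obtain ⟨⟨c, j⟩, hcj⟩ := hf 1
  have hrec := eq_zsmul_add_zsmul_of_apply_eq_one hcomm hcj
  refine ⟨(injective_iff_map_eq_zero _).2 fun b hb => ?_, fun ⟨⟨a, k⟩, hak⟩ => ?_⟩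
  · have hb' : f (0, 1) • b = 0 ∧ f.comp (inl B ℤ) b = 0 := by
      simpa using congrArg Subtype.val hb
    rw [hrec b, hb'.2, mul_smul, hb'.1]
    simp
  · rw [mem_ker, apply_eq_comp_inl_add_mul] at hak
    rw [apply_eq_comp_inl_add_mul] at hcj
    have hφa : f.comp (inl B ℤ) a = -(k * f (0, 1)) := by linarith
    refine ⟨j • a - k • c, Subtype.ext (Prod.ext ?_ ?_)⟩
    · calc f (0, 1) • (j • a - k • c) = (j * f (0, 1)) • a - (k * f (0, 1)) • c := by
            rw [smul_sub, smul_smul, smul_smul, mul_comm j, mul_comm k]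
        _ = a := by
            conv_rhs => rw [hrec a, hφa, neg_smul]
            abel
    · show -f.comp (inl B ℤ) (j • a - k • c) = k
      simp only [map_sub, map_zsmul, smul_eq_mul]
      linear_combination -(j * hak) + k * hcj

theorem nonempty_ker_addEquiv (hf : Function.Surjective f) : Nonempty (f.ker ≃+ B) :=
  ⟨(AddEquiv.ofBijective _ (bijective_toKerProdInt hcomm hf)).symm⟩

end KernelOfProdInt

end AddMonoidHom

theorem stmt16_general (B : Type*) [AddCommGroup B]
    (hB : ∀ φ : B →+ ℤ, φ ≠ 0 → Function.Injective φ)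
    (f : B × ℤ →+ ℤ) (hf : Function.Surjective f) :
    Nonempty (f.ker ≃+ B) :=
  f.nonempty_ker_addEquiv
    ((f.comp (AddMonoidHom.inl B ℤ)).zsmul_comm_of_injective_of_ne_zero (hB _)) hf

theorem stmt16 (B : Type*) [AddCommGroup B] (htf : AddMonoid.IsTorsionFree B)
    (hB : ∀ φ : B →+ ℤ, φ ≠ 0 → Function.Injective φ)
    (f : B × ℤ →+ ℤ) (hf : Function.Surjective f) :
    Nonempty (f.ker ≃+ B) :=
  stmt16_general B hB f hf
end

section
/- Let B be an abelian group, f₁ : B → ℤ a homomorphism, and s a positive integer with f₁(B) + sℤ = ℤ. Then f₁⁻¹(sℤ) = sB + ker f₁, and if f₁ is injective then f₁⁻¹(sℤ) = sB. -/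
theorem stmt17 (B : Type*) [AddCommGroup B] (f₁ : B →+ ℤ) (s : ℤ) (hs : 0 < s)
    (h : f₁.range ⊔ AddSubgroup.zmultiples s = ⊤) :
    AddSubgroup.comap f₁ (AddSubgroup.zmultiples s) =
      (zsmulAddGroupHom s : B →+ B).range ⊔ f₁.ker ∧
    (Function.Injective f₁ →
      AddSubgroup.comap f₁ (AddSubgroup.zmultiples s) =
        (zsmulAddGroupHom s : B →+ B).range) := by
  have h1 : (1 : ℤ) ∈ f₁.range ⊔ AddSubgroup.zmultiples s := h ▸ AddSubgroup.mem_top 1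
  rw [AddSubgroup.mem_sup] at h1
  obtain ⟨a, ⟨b₀, hb₀⟩, c, hc, habc⟩ := h1
  obtain ⟨k, hk⟩ := AddSubgroup.mem_zmultiples_iff.mp hc
  have key : AddSubgroup.comap f₁ (AddSubgroup.zmultiples s) =
      (zsmulAddGroupHom s : B →+ B).range ⊔ f₁.ker := by
    apply le_antisymm
    · intro x hx
      obtain ⟨m, hm⟩ := AddSubgroup.mem_zmultiples_iff.mp hx
      rw [AddSubgroup.mem_sup]
      refine ⟨s • (m • b₀ + k • x), ⟨m • b₀ + k • x, rfl⟩,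
        x - s • (m • b₀ + k • x), ?_, by abel⟩
      have hmx : f₁ x = m * s := by simpa [smul_eq_mul] using hm.symm
      have hks : k * s = c := by simpa [smul_eq_mul] using hk
      show f₁ _ = 0
      simp only [map_sub, map_zsmul, map_add, hb₀, smul_eq_mul, hmx]
      linear_combination (-(s*m)) * habc - s*m*hks
    · rw [sup_le_iff]
      constructor
      · rintro x ⟨b, rfl⟩
        exact AddSubgroup.mem_zmultiples_iff.mpr
          ⟨f₁ b, by simp [zsmulAddGroupHom_apply, smul_eq_mul, mul_comm]⟩
      · intro x hx
        have hx0 : f₁ x = 0 := hx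
        exact AddSubgroup.mem_zmultiples_iff.mpr ⟨0, by simp [hx0]⟩
  refine ⟨key, fun hinj => ?_⟩
  rw [key, (AddMonoidHom.ker_eq_bot_iff f₁).mpr hinj, sup_bot_eq]
end
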